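/- For every simple 𝔤₀-supermodule V, the simple 𝔤-supermodule L(V) is not isomorphic to its parity shift Π L(V). -/

import Mathlib

noncomputable section

open Module Function

/-- A complex Lie superalgebra `𝔤 = 𝔤₀̄ ⊕ 𝔤₁̄` equipped with a compatible `ℤ`-grading
`𝔤 = 𝔤₋₁ ⊕ 𝔤₀ ⊕ 𝔤₁`, i.e. `𝔤₀ = 𝔤₀̄`, `𝔤₁̄ = 𝔤₁ ⊕ 𝔤₋₁`, the pieces `𝔤±₁` are
`𝔤₀̄`-submodules and `[𝔤₁,𝔤₁] = [𝔤₋₁,𝔤₋₁] = 0`.  The super skew-symmetry and the super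
Jacobi identity are imposed on (parity-)homogeneous elements, as usual. -/
structure GLSA where
  carrier : Type
  [isACG : AddCommGroup carrier]
  [isMod : Module ℂ carrier]
  bracket : carrier →ₗ[ℂ] carrier →ₗ[ℂ] carrier
  gneg : Submodule ℂ carrier
  g0 : Submodule ℂ carrier
  gpos : Submodule ℂ carrier
  oddCompl : IsCompl g0 (gneg ⊔ gpos)
  disjNP : Disjoint gneg gpos
  br_00 : ∀ x ∈ g0, ∀ y ∈ g0, bracket x y ∈ g0
  br_0p : ∀ x ∈ g0, ∀ y ∈ gpos, bracket x y ∈ gpos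
  br_0n : ∀ x ∈ g0, ∀ y ∈ gneg, bracket x y ∈ gneg
  br_pn : ∀ x ∈ gpos, ∀ y ∈ gneg, bracket x y ∈ g0
  br_pp : ∀ x ∈ gpos, ∀ y ∈ gpos, bracket x y = 0
  br_nn : ∀ x ∈ gneg, ∀ y ∈ gneg, bracket x y = 0
  skew_e : ∀ x ∈ g0, ∀ y, bracket x y = - bracket y x
  skew_oo : ∀ x ∈ gneg ⊔ gpos, ∀ y ∈ gneg ⊔ gpos, bracket x y = bracket y x
  jacobi_e : ∀ x y z : carrier, (x ∈ g0 ∨ y ∈ g0) →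
    bracket x (bracket y z) = bracket (bracket x y) z + bracket y (bracket x z)
  jacobi_oo : ∀ x ∈ gneg ⊔ gpos, ∀ y ∈ gneg ⊔ gpos, ∀ z,
    bracket x (bracket y z) = bracket (bracket x y) z - bracket y (bracket x z)

attribute [instance] GLSA.isACG GLSA.isMod

/-- The odd part `𝔤₁̄ = 𝔤₋₁ ⊕ 𝔤₁` of `L`. -/
def GLSA.odd (L : GLSA) : Submodule ℂ L.carrier := L.gneg ⊔ L.gpos

/-- A `𝔤`-supermodule: a `ℤ₂`-graded complex vector space with a compatible action of the
Lie superalgebra `L` (signs in the compatibility with the bracket are imposed on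
homogeneous elements). -/
structure SMod (L : GLSA) where
  carrier : Type
  [isACG : AddCommGroup carrier]
  [isMod : Module ℂ carrier]
  act : L.carrier →ₗ[ℂ] carrier →ₗ[ℂ] carrier
  ev : Submodule ℂ carrier
  od : Submodule ℂ carrier
  grading : IsCompl ev od
  act_e_ev : ∀ x ∈ L.g0, ∀ m ∈ ev, act x m ∈ ev
  act_e_od : ∀ x ∈ L.g0, ∀ m ∈ od, act x m ∈ od
  act_o_ev : ∀ x ∈ L.odd, ∀ m ∈ ev, act x m ∈ od
  act_o_od : ∀ x ∈ L.odd, ∀ m ∈ od, act x m ∈ ev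
  act_br_e : ∀ x y : L.carrier, (x ∈ L.g0 ∨ y ∈ L.g0) → ∀ m,
    act (L.bracket x y) m = act x (act y m) - act y (act x m)
  act_br_oo : ∀ x ∈ L.odd, ∀ y ∈ L.odd, ∀ m,
    act (L.bracket x y) m = act x (act y m) + act y (act x m)

attribute [instance] SMod.isACG SMod.isMod

/-- A `𝔤₀̄`-supermodule: a `ℤ₂`-graded complex vector space with an action of the (purely
even) Lie algebra `𝔤₀̄ = 𝔤₀` preserving the grading. -/
structure SMod0 (L : GLSA) where
  carrier : Type
  [isACG : AddCommGroup carrier]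
  [isMod : Module ℂ carrier]
  act : ↥L.g0 →ₗ[ℂ] carrier →ₗ[ℂ] carrier
  ev : Submodule ℂ carrier
  od : Submodule ℂ carrier
  grading : IsCompl ev od
  act_ev : ∀ (x : L.g0), ∀ m ∈ ev, act x m ∈ ev
  act_od : ∀ (x : L.g0), ∀ m ∈ od, act x m ∈ od
  act_br : ∀ (x y : L.g0) (m : carrier),
    act ⟨L.bracket ↑x ↑y, L.br_00 ↑x x.2 ↑y y.2⟩ m = act x (act y m) - act y (act x m)

attribute [instance] SMod0.isACG SMod0.isMod

/-- A homomorphism of `𝔤`-supermodules (homogeneous of degree zero). -/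
structure SHom {L : GLSA} (M N : SMod L) where
  toLin : M.carrier →ₗ[ℂ] N.carrier
  map_ev : ∀ m ∈ M.ev, toLin m ∈ N.ev
  map_od : ∀ m ∈ M.od, toLin m ∈ N.od
  equivar : ∀ (x : L.carrier) (m : M.carrier), toLin (M.act x m) = N.act x (toLin m)

/-- Isomorphism of `𝔤`-supermodules. -/
def SIso {L : GLSA} (M N : SMod L) : Prop := ∃ f : SHom M N, Bijective f.toLin

/-- Isomorphism of `𝔤₀̄`-supermodules. -/
def SIso0 {L : GLSA} (V W : SMod0 L) : Prop :=
  ∃ e : V.carrier ≃ₗ[ℂ] W.carrier,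
    (∀ v ∈ V.ev, e v ∈ W.ev) ∧ (∀ v ∈ V.od, e v ∈ W.od) ∧
    (∀ (x : L.g0) (v : V.carrier), e (V.act x v) = W.act x (e v))

/-- Isomorphism of `𝔤`-supermodules up to parity change. -/
def SIsoUpToParity {L : GLSA} (M N : SMod L) : Prop :=
  ∃ e : M.carrier ≃ₗ[ℂ] N.carrier,
    (∀ (x : L.carrier) (m : M.carrier), e (M.act x m) = N.act x (e m)) ∧
    (((∀ m ∈ M.ev, e m ∈ N.ev) ∧ (∀ m ∈ M.od, e m ∈ N.od)) ∨
     ((∀ m ∈ M.ev, e m ∈ N.od) ∧ (∀ m ∈ M.od, e m ∈ N.ev)))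

namespace SMod

variable {L : GLSA}

/-- A (graded) sub-supermodule of a `𝔤`-supermodule. -/
def IsSubmod (M : SMod L) (N : Submodule ℂ M.carrier) : Prop :=
  (∀ (x : L.carrier), ∀ m ∈ N, M.act x m ∈ N) ∧ N ≤ (N ⊓ M.ev) ⊔ (N ⊓ M.od)

/-- A simple sub-supermodule. -/
def IsSimpleSub (M : SMod L) (N : Submodule ℂ M.carrier) : Prop :=
  M.IsSubmod N ∧ N ≠ ⊥ ∧ ∀ N', M.IsSubmod N' → N' ≤ N → N' = ⊥ ∨ N' = N

/-- The socle: the sum of all simple sub-supermodules. -/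
def socle (M : SMod L) : Submodule ℂ M.carrier := sSup {N | M.IsSimpleSub N}

/-- The sub-supermodule generated by a subspace, i.e. `U(𝔤)·S`. -/
def gen (M : SMod L) (S : Submodule ℂ M.carrier) : Submodule ℂ M.carrier :=
  sInf {N | M.IsSubmod N ∧ S ≤ N}

/-- Simplicity of a `𝔤`-supermodule. -/
def IsSimple (M : SMod L) : Prop :=
  (⊤ : Submodule ℂ M.carrier) ≠ ⊥ ∧ ∀ N, M.IsSubmod N → N = ⊥ ∨ N = ⊤

/-- Indecomposability of a `𝔤`-supermodule. -/
def Indecomposable (M : SMod L) : Prop :=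
  (⊤ : Submodule ℂ M.carrier) ≠ ⊥ ∧
  ∀ N₁ N₂, M.IsSubmod N₁ → M.IsSubmod N₂ → N₁ ⊓ N₂ = ⊥ → N₁ ⊔ N₂ = ⊤ →
    N₁ = ⊥ ∨ N₂ = ⊥

/-- The parity change functor `Π`. -/
def pshift (M : SMod L) : SMod L where
  carrier := M.carrier
  act := M.act
  ev := M.od
  od := M.ev
  grading := M.grading.symm
  act_e_ev := M.act_e_od
  act_e_od := M.act_e_ev
  act_o_ev := M.act_o_od
  act_o_od := M.act_o_ev
  act_br_e := M.act_br_e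
  act_br_oo := M.act_br_oo

/-- The space `M^{𝔤₁}` of `𝔤₁`-invariants. -/
def invPos (M : SMod L) : Submodule ℂ M.carrier where
  carrier := {m | ∀ x ∈ L.gpos, M.act x m = 0}
  add_mem' := by
    intro a b ha hb x hx
    rw [map_add, ha x hx, hb x hx, add_zero]
  zero_mem' := by intro x hx; simp
  smul_mem' := by
    intro c a ha x hx
    rw [map_smul, ha x hx, smul_zero]

/-- The space `M^{𝔤₋₁}` of `𝔤₋₁`-invariants. -/
def invNeg (M : SMod L) : Submodule ℂ M.carrier where
  carrier := {m | ∀ x ∈ L.gneg, M.act x m = 0}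
  add_mem' := by
    intro a b ha hb x hx
    rw [map_add, ha x hx, hb x hx, add_zero]
  zero_mem' := by intro x hx; simp
  smul_mem' := by
    intro c a ha x hx
    rw [map_smul, ha x hx, smul_zero]

/-- Iterated action of a list of elements of `𝔤`. -/
def actList (M : SMod L) : List L.carrier → M.carrier → M.carrier
  | [], m => m
  | x :: xs, m => M.act x (M.actList xs m)

end SMod

namespace SMod0

variable {L : GLSA}

/-- A (graded) sub-supermodule of a `𝔤₀̄`-supermodule. -/
def IsSubmod (V : SMod0 L) (N : Submodule ℂ V.carrier) : Prop :=
  (∀ (x : L.g0), ∀ v ∈ N, V.act x v ∈ N) ∧ N ≤ (N ⊓ V.ev) ⊔ (N ⊓ V.od)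

/-- Simplicity of a `𝔤₀̄`-supermodule. -/
def IsSimple (V : SMod0 L) : Prop :=
  (⊤ : Submodule ℂ V.carrier) ≠ ⊥ ∧ ∀ N, V.IsSubmod N → N = ⊥ ∨ N = ⊤

end SMod0

/-- `IsKac V K η` expresses that `K`, together with the (even, `𝔤₀̄`-equivariant) unit map
`η : V → K` whose image is annihilated by `𝔤₁`, is *the* Kac module
`K(V) = Ind_{𝔤≥0}^{𝔤} V` of the `𝔤₀̄`-supermodule `V` (on which `𝔤₁` acts by zero), i.e.
satisfies the universal property `Hom_𝔤(K(V), M) = Hom_{𝔤₀̄}(V, M^{𝔤₁})`. -/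
structure IsKac {L : GLSA} (V : SMod0 L) (K : SMod L) (η : V.carrier →ₗ[ℂ] K.carrier) : Prop where
  map_ev : ∀ v ∈ V.ev, η v ∈ K.ev
  map_od : ∀ v ∈ V.od, η v ∈ K.od
  equivar : ∀ (x : L.g0) (v : V.carrier), η (V.act x v) = K.act ↑x (η v)
  pos_zero : ∀ x ∈ L.gpos, ∀ v : V.carrier, K.act x (η v) = 0
  injective : Injective η
  generates : K.gen (LinearMap.range η) = ⊤
  universal : ∀ (M : SMod L) (φ : V.carrier →ₗ[ℂ] M.carrier),
    (∀ v ∈ V.ev, φ v ∈ M.ev) → (∀ v ∈ V.od, φ v ∈ M.od) →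
    (∀ (x : L.g0) (v : V.carrier), φ (V.act x v) = M.act ↑x (φ v)) →
    (∀ x ∈ L.gpos, ∀ v : V.carrier, M.act x (φ v) = 0) →
    ∃! Φ : SHom K M, ∀ v, Φ.toLin (η v) = φ v

/-- The opposite Kac module `K'(V) = Ind_{𝔤≤0}^{𝔤} V` (with `𝔤₋₁` acting by zero on `V`),
described by its universal property. -/
structure IsKac' {L : GLSA} (V : SMod0 L) (K : SMod L) (η : V.carrier →ₗ[ℂ] K.carrier) : Prop where
  map_ev : ∀ v ∈ V.ev, η v ∈ K.ev
  map_od : ∀ v ∈ V.od, η v ∈ K.od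
  equivar : ∀ (x : L.g0) (v : V.carrier), η (V.act x v) = K.act ↑x (η v)
  neg_zero : ∀ x ∈ L.gneg, ∀ v : V.carrier, K.act x (η v) = 0
  injective : Injective η
  generates : K.gen (LinearMap.range η) = ⊤
  universal : ∀ (M : SMod L) (φ : V.carrier →ₗ[ℂ] M.carrier),
    (∀ v ∈ V.ev, φ v ∈ M.ev) → (∀ v ∈ V.od, φ v ∈ M.od) →
    (∀ (x : L.g0) (v : V.carrier), φ (V.act x v) = M.act ↑x (φ v)) →
    (∀ x ∈ L.gneg, ∀ v : V.carrier, M.act x (φ v) = 0) →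
    ∃! Φ : SHom K M, ∀ v, Φ.toLin (η v) = φ v

/-- `IsCoindPos W C ε` expresses that `C`, together with the (even, `𝔤₀̄`-equivariant)
counit `ε : C → W` killing `𝔤₁·C`, is the coinduced module `Coind_{𝔤≥0}^{𝔤}(W)` of the
`𝔤₀̄`-supermodule `W` (with `𝔤₁` acting by zero), i.e. satisfies the universal property
`Hom_𝔤(M, Coind(W)) = Hom_{𝔤≥0}(Res M, W)`. -/
structure IsCoindPos {L : GLSA} (W : SMod0 L) (C : SMod L) (ε : C.carrier →ₗ[ℂ] W.carrier) : Prop where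
  map_ev : ∀ c ∈ C.ev, ε c ∈ W.ev
  map_od : ∀ c ∈ C.od, ε c ∈ W.od
  equivar : ∀ (x : L.g0) (c : C.carrier), ε (C.act ↑x c) = W.act x (ε c)
  pos_zero : ∀ x ∈ L.gpos, ∀ c : C.carrier, ε (C.act x c) = 0
  universal : ∀ (M : SMod L) (ψ : M.carrier →ₗ[ℂ] W.carrier),
    (∀ m ∈ M.ev, ψ m ∈ W.ev) → (∀ m ∈ M.od, ψ m ∈ W.od) →
    (∀ (x : L.g0) (m : M.carrier), ψ (M.act ↑x m) = W.act x (ψ m)) →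
    (∀ x ∈ L.gpos, ∀ m : M.carrier, ψ (M.act x m) = 0) →
    ∃! Φ : SHom M C, ∀ m, ε (Φ.toLin m) = ψ m

/-- `Coind_{𝔤≤0}^{𝔤}(W)`, by its universal property. -/
structure IsCoindNeg {L : GLSA} (W : SMod0 L) (C : SMod L) (ε : C.carrier →ₗ[ℂ] W.carrier) : Prop where
  map_ev : ∀ c ∈ C.ev, ε c ∈ W.ev
  map_od : ∀ c ∈ C.od, ε c ∈ W.od
  equivar : ∀ (x : L.g0) (c : C.carrier), ε (C.act ↑x c) = W.act x (ε c)
  neg_zero : ∀ x ∈ L.gneg, ∀ c : C.carrier, ε (C.act x c) = 0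
  universal : ∀ (M : SMod L) (ψ : M.carrier →ₗ[ℂ] W.carrier),
    (∀ m ∈ M.ev, ψ m ∈ W.ev) → (∀ m ∈ M.od, ψ m ∈ W.od) →
    (∀ (x : L.g0) (m : M.carrier), ψ (M.act ↑x m) = W.act x (ψ m)) →
    (∀ x ∈ L.gneg, ∀ m : M.carrier, ψ (M.act x m) = 0) →
    ∃! Φ : SHom M C, ∀ m, ε (Φ.toLin m) = ψ m

/-- The subspace `Λ^max(𝔤₋₁) ⊗ V ⊆ K(V)`: the span of all elements obtained by acting on
`η(V)` with `dim 𝔤₋₁` many elements of `𝔤₋₁`. -/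
def botPartNeg {L : GLSA} (V : SMod0 L) (K : SMod L) (η : V.carrier →ₗ[ℂ] K.carrier) :
    Submodule ℂ K.carrier :=
  Submodule.span ℂ {m | ∃ (xs : List L.carrier) (v : V.carrier),
    xs.length = finrank ℂ ↥L.gneg ∧ (∀ x ∈ xs, x ∈ L.gneg) ∧ m = K.actList xs (η v)}

/-- The subspace `Λ^max(𝔤₁) ⊗ V ⊆ K'(V)`. -/
def botPartPos {L : GLSA} (V : SMod0 L) (K : SMod L) (η : V.carrier →ₗ[ℂ] K.carrier) :
    Submodule ℂ K.carrier :=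
  Submodule.span ℂ {m | ∃ (xs : List L.carrier) (v : V.carrier),
    xs.length = finrank ℂ ↥L.gpos ∧ (∀ x ∈ xs, x ∈ L.gpos) ∧ m = K.actList xs (η v)}

/-- For `x ∈ 𝔤₀̄`, the operator `ad x` restricted to `𝔤₁`. -/
def adPos (L : GLSA) (x : L.g0) : ↥L.gpos →ₗ[ℂ] ↥L.gpos :=
  (L.bracket ↑x).restrict (fun y hy => L.br_0p ↑x x.2 y hy)

/-- For `x ∈ 𝔤₀̄`, the operator `ad x` restricted to `𝔤₋₁`. -/
def adNeg (L : GLSA) (x : L.g0) : ↥L.gneg →ₗ[ℂ] ↥L.gneg :=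
  (L.bracket ↑x).restrict (fun y hy => L.br_0n ↑x x.2 y hy)

/-- The character by which `𝔤₀̄` acts on the one-dimensional module `Λ^max(𝔤₁)`. -/
def traceCharPos (L : GLSA) (x : L.g0) : ℂ := LinearMap.trace ℂ ↥L.gpos (adPos L x)

/-- The character by which `𝔤₀̄` acts on the one-dimensional module `Λ^max(𝔤₋₁)`. -/
def traceCharNeg (L : GLSA) (x : L.g0) : ℂ := LinearMap.trace ℂ ↥L.gneg (adNeg L x)

/-- `IsTwistBy V W χ swap` expresses that `W ≅ ℂ_χ ⊗ V` as `𝔤₀̄`-supermodules, where `ℂ_χ`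
is the one-dimensional module with character `χ`, of odd parity iff `swap = true`.
Taking `χ` to be `traceCharPos`/`traceCharNeg` (resp. their negatives) and `swap` the parity
of `dim 𝔤±₁` expresses `W ≅ Λ^max(𝔤±₁) ⊗ V` (resp. `W ≅ Λ^max(𝔤±₁^*) ⊗ V`). -/
def IsTwistBy {L : GLSA} (V W : SMod0 L) (χ : ↥L.g0 → ℂ) (swap : Bool) : Prop :=
  ∃ e : V.carrier ≃ₗ[ℂ] W.carrier,
    (∀ (x : L.g0) (v : V.carrier), W.act x (e v) = e (V.act x v) + χ x • e v) ∧
    (if swap then (∀ v ∈ V.ev, e v ∈ W.od) ∧ (∀ v ∈ V.od, e v ∈ W.ev)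
     else (∀ v ∈ V.ev, e v ∈ W.ev) ∧ (∀ v ∈ V.od, e v ∈ W.od))

/-- Parity (as a `Bool`) of `dim 𝔤₁`. -/
def parPos (L : GLSA) : Bool := (finrank ℂ ↥L.gpos) % 2 == 1

/-- Parity (as a `Bool`) of `dim 𝔤₋₁`. -/
def parNeg (L : GLSA) : Bool := (finrank ℂ ↥L.gneg) % 2 == 1

/-! The `𝔤₁`-invariants of `L(V)` are exactly the image of `V`, which is purely even or purely
odd since `V` is simple. An odd isomorphism `L(V) ≅ Π L(V)` maps invariants to invariants while
swapping parity, so it vanishes on them, which is absurd.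

To compute the invariants, split `K(V) = V ⊕ 𝔤₋₁K(V)`: the sum is direct because the two
pieces lie in different eigenspaces of the degree operator. Since `𝔤₋₁` acts nilpotently
(through the finite-dimensional algebra `Λ(𝔤₋₁)`) and `V` is simple, every proper submodule
of `K(V)` lies in `𝔤₋₁K(V)`. Hence the kernel of `K(V) → L(V)` is the largest submodule inside
`𝔤₋₁K(V)`, i.e. the set of vectors that `U(𝔤₁)` keeps inside `𝔤₋₁K(V)`, and every
`𝔤₁`-invariant of `L(V)` lifted into `𝔤₋₁K(V)` lies in it. -/

open Submodule

namespace Submodule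

variable {E : Type*} [AddCommGroup E] [Module ℂ E]

def IsGradedBy (A E₀ E₁ : Submodule ℂ E) : Prop := A ≤ A ⊓ E₀ ⊔ A ⊓ E₁

variable {A B E₀ E₁ : Submodule ℂ E}

lemma IsGradedBy.symm (h : A.IsGradedBy E₀ E₁) : A.IsGradedBy E₁ E₀ := by
  rwa [IsGradedBy, sup_comm]

lemma IsGradedBy.mem_left (h : A.IsGradedBy E₀ E₁) (hE : Disjoint E₀ E₁)
    {a b : E} (ha : a ∈ E₀) (hb : b ∈ E₁) (hab : a + b ∈ A) : a ∈ A := by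
  obtain ⟨a', ⟨ha'A, ha'⟩, b', ⟨hb'A, hb'⟩, hsum⟩ := mem_sup.mp (h hab)
  have : a - a' = b' - b := by rw [sub_eq_sub_iff_add_eq_add, ← hsum, add_comm]
  have h0 : a - a' = 0 :=
    disjoint_def.mp hE _ (sub_mem ha ha') (this ▸ sub_mem hb' hb)
  rwa [sub_eq_zero.mp h0]

lemma isGradedBy_top (hE : Codisjoint E₀ E₁) : (⊤ : Submodule ℂ E).IsGradedBy E₀ E₁ := by
  simp [IsGradedBy, codisjoint_iff.mp hE]

lemma isGradedBy_iSup {ι : Sort*} {A : ι → Submodule ℂ E} (h : ∀ i, (A i).IsGradedBy E₀ E₁) :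
    (⨆ i, A i).IsGradedBy E₀ E₁ :=
  iSup_le fun i => (h i).trans <| sup_le_sup (inf_le_inf_right _ (le_iSup A i))
    (inf_le_inf_right _ (le_iSup A i))

lemma isGradedBy_sup (hA : A.IsGradedBy E₀ E₁) (hB : B.IsGradedBy E₀ E₁) :
    (A ⊔ B).IsGradedBy E₀ E₁ := by
  rw [sup_eq_iSup]
  exact isGradedBy_iSup fun b => by cases b <;> assumption

variable {F : Type*} [AddCommGroup F] [Module ℂ F] {F₀ F₁ : Submodule ℂ F} {f : E →ₗ[ℂ] F}

lemma IsGradedBy.map (h : A.IsGradedBy E₀ E₁) (h₀ : E₀ ≤ F₀.comap f) (h₁ : E₁ ≤ F₁.comap f) :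
    (A.map f).IsGradedBy F₀ F₁ := by
  rintro _ ⟨a, ha, rfl⟩
  obtain ⟨a₀, ⟨ha₀A, ha₀⟩, a₁, ⟨ha₁A, ha₁⟩, rfl⟩ := mem_sup.mp (h ha)
  rw [map_add]
  exact add_mem (mem_sup_left ⟨mem_map_of_mem ha₀A, h₀ ha₀⟩)
    (mem_sup_right ⟨mem_map_of_mem ha₁A, h₁ ha₁⟩)

lemma IsGradedBy.comap {B : Submodule ℂ F} (h : B.IsGradedBy F₀ F₁) (hF : Disjoint F₀ F₁)
    (hE : Codisjoint E₀ E₁) (h₀ : E₀ ≤ F₀.comap f) (h₁ : E₁ ≤ F₁.comap f) :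
    (B.comap f).IsGradedBy E₀ E₁ := by
  intro a ha
  obtain ⟨a₀, ha₀, a₁, ha₁, rfl⟩ := mem_sup.mp (codisjoint_iff.mp hE ▸ mem_top : a ∈ E₀ ⊔ E₁)
  have hB : f a₀ + f a₁ ∈ B := by rw [← map_add]; exact ha
  have h₀B : f a₀ ∈ B := h.mem_left hF (h₀ ha₀) (h₁ ha₁) hB
  have h₁B : f a₁ ∈ B := by simpa using sub_mem hB h₀B
  exact add_mem (mem_sup_left ⟨h₀B, ha₀⟩) (mem_sup_right ⟨h₁B, ha₁⟩)

end Submodule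

namespace GLSA

variable (L : GLSA)

lemma gneg_le_odd : L.gneg ≤ L.odd := le_sup_left

lemma gpos_le_odd : L.gpos ≤ L.odd := le_sup_right

lemma g0_sup_odd : L.g0 ⊔ L.odd = ⊤ := codisjoint_iff.mp L.oddCompl.codisjoint

lemma isCompl_gpos : IsCompl L.gpos (L.g0 ⊔ L.gneg) := by
  constructor
  · have h := L.disjNP.symm.disjoint_sup_right_of_disjoint_sup_left
      (by rw [sup_comm]; exact L.oddCompl.disjoint.symm)
    rwa [sup_comm L.gneg] at h
  · rw [codisjoint_iff, sup_comm, sup_assoc, ← L.g0_sup_odd, GLSA.odd]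

lemma isCompl_gneg : IsCompl L.gneg (L.g0 ⊔ L.gpos) := by
  constructor
  · have h := L.disjNP.disjoint_sup_right_of_disjoint_sup_left L.oddCompl.disjoint.symm
    rwa [sup_comm L.gpos] at h
  · rw [codisjoint_iff, sup_comm, sup_assoc, sup_comm L.gpos, ← L.g0_sup_odd, GLSA.odd]

/-- The automorphism of `𝔤` acting by `t ^ k` on `𝔤ₖ`. -/
def gradingAut (t : ℂ) : L.carrier →ₗ[ℂ] L.carrier :=
  LinearMap.id + (t - 1) • L.gpos.projection _ L.isCompl_gpos +
    (t⁻¹ - 1) • L.gneg.projection _ L.isCompl_gneg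

variable {L}

lemma exists_add_add (x : L.carrier) :
    ∃ a ∈ L.g0, ∃ b ∈ L.gneg, ∃ c ∈ L.gpos, a + (b + c) = x := by
  obtain ⟨a, ha, bc, hbc, rfl⟩ := mem_sup.mp (L.g0_sup_odd ▸ mem_top : x ∈ L.g0 ⊔ L.odd)
  obtain ⟨b, hb, c, hc, rfl⟩ := mem_sup.mp hbc
  exact ⟨a, ha, b, hb, c, hc, rfl⟩

lemma bracket_mem_gneg_of_mem_gneg_of_mem_g0 {x y : L.carrier} (hx : x ∈ L.gneg)
    (hy : y ∈ L.g0) : L.bracket x y ∈ L.gneg := by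
  rw [← neg_neg (L.bracket x y), ← L.skew_e y hy x]
  exact neg_mem (L.br_0n y hy x hx)

lemma bracket_mem_gpos_of_mem_gpos_of_mem_g0 {x y : L.carrier} (hx : x ∈ L.gpos)
    (hy : y ∈ L.g0) : L.bracket x y ∈ L.gpos := by
  rw [← neg_neg (L.bracket x y), ← L.skew_e y hy x]
  exact neg_mem (L.br_0p y hy x hx)

lemma bracket_mem_g0_of_mem_gneg_of_mem_gpos {x y : L.carrier} (hx : x ∈ L.gneg)
    (hy : y ∈ L.gpos) : L.bracket x y ∈ L.g0 := by
  rw [L.skew_oo x (L.gneg_le_odd hx) y (L.gpos_le_odd hy)]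
  exact L.br_pn y hy x hx

variable {t : ℂ} {x : L.carrier}

lemma gradingAut_of_mem_g0 (hx : x ∈ L.g0) : L.gradingAut t x = x := by
  simp [gradingAut, projection_apply_of_mem_right _ (mem_sup_left hx)]

lemma gradingAut_of_mem_gpos (hx : x ∈ L.gpos) : L.gradingAut t x = t • x := by
  simp [gradingAut, projection_apply_of_mem_left _ hx,
    projection_apply_of_mem_right _ (mem_sup_right hx : x ∈ L.g0 ⊔ L.gpos)]
  module

lemma gradingAut_of_mem_gneg (hx : x ∈ L.gneg) : L.gradingAut t x = t⁻¹ • x := by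
  simp [gradingAut, projection_apply_of_mem_left _ hx,
    projection_apply_of_mem_right _ (mem_sup_right hx : x ∈ L.g0 ⊔ L.gneg)]
  module

lemma gradingAut_mem_odd (hx : x ∈ L.odd) : L.gradingAut t x ∈ L.odd := by
  obtain ⟨b, hb, c, hc, rfl⟩ := mem_sup.mp hx
  rw [map_add, gradingAut_of_mem_gneg hb, gradingAut_of_mem_gpos hc]
  exact add_mem (smul_mem _ _ (L.gneg_le_odd hb)) (smul_mem _ _ (L.gpos_le_odd hc))

lemma gradingAut_bracket (ht : t ≠ 0) (x y : L.carrier) :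
    L.gradingAut t (L.bracket x y) = L.bracket (L.gradingAut t x) (L.gradingAut t y) := by
  obtain ⟨a, ha, b, hb, c, hc, rfl⟩ := exists_add_add x
  obtain ⟨a', ha', b', hb', c', hc', rfl⟩ := exists_add_add y
  simp only [map_add, LinearMap.add_apply, map_smul, LinearMap.smul_apply,
    gradingAut_of_mem_g0 ha, gradingAut_of_mem_gneg hb, gradingAut_of_mem_gpos hc,
    gradingAut_of_mem_g0 ha', gradingAut_of_mem_gneg hb', gradingAut_of_mem_gpos hc',
    gradingAut_of_mem_g0 (L.br_00 a ha a' ha'), gradingAut_of_mem_gneg (L.br_0n a ha b' hb'),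
    gradingAut_of_mem_gpos (L.br_0p a ha c' hc'),
    gradingAut_of_mem_gneg (bracket_mem_gneg_of_mem_gneg_of_mem_g0 hb ha'),
    L.br_nn b hb b' hb', gradingAut_of_mem_g0 (bracket_mem_g0_of_mem_gneg_of_mem_gpos hb hc'),
    gradingAut_of_mem_gpos (bracket_mem_gpos_of_mem_gpos_of_mem_g0 hc ha'),
    gradingAut_of_mem_g0 (L.br_pn c hc b' hb'), L.br_pp c hc c' hc', smul_zero,
    zero_add, add_zero, smul_add, smul_smul, inv_mul_cancel₀ ht, mul_inv_cancel₀ ht, one_smul]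

end GLSA

namespace SMod

variable {L : GLSA} (M : SMod L)

def lower (A : Submodule ℂ M.carrier) : Submodule ℂ M.carrier := map₂ M.act L.gneg A

variable {M}

lemma act_mem_lower {A : Submodule ℂ M.carrier} {y : L.carrier} (hy : y ∈ L.gneg)
    {a : M.carrier} (ha : a ∈ A) : M.act y a ∈ M.lower A :=
  apply_mem_map₂ _ hy ha

lemma act_act_of_mem_gneg {y : L.carrier} (hy : y ∈ L.gneg) (m : M.carrier) :
    M.act y (M.act y m) = 0 := by
  have h := M.act_br_oo y (L.gneg_le_odd hy) y (L.gneg_le_odd hy) m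
  rw [L.br_nn y hy y hy, map_zero, LinearMap.zero_apply, eq_comm, ← two_smul ℂ] at h
  exact (smul_eq_zero.mp h).resolve_left two_ne_zero

variable (M) in
def gnegExtAct : ExteriorAlgebra ℂ L.gneg →ₐ[ℂ] Module.End ℂ M.carrier :=
  ExteriorAlgebra.lift ℂ ⟨M.act ∘ₗ L.gneg.subtype, fun y => by
    ext m; exact act_act_of_mem_gneg y.2 m⟩

lemma lower_iterate_le (k : ℕ) :
    M.lower^[k] ⊤ ≤ map₂ M.gnegExtAct.toLinearMap (⋀[ℂ]^k L.gneg) ⊤ := by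
  induction k with
  | zero =>
    intro m _
    have h1 : (1 : ExteriorAlgebra ℂ L.gneg) ∈ ⋀[ℂ]^0 L.gneg := by
      simp [ExteriorAlgebra.exteriorPower, Submodule.one_eq_range]
    simpa using apply_mem_map₂ M.gnegExtAct.toLinearMap h1 (mem_top (x := m))
  | succ k ih =>
    rw [Function.iterate_succ_apply']
    refine (map₂_le_map₂_right ih).trans (map₂_le.mpr fun y hy t ht => ?_)
    suffices h : map₂ M.gnegExtAct.toLinearMap (⋀[ℂ]^k L.gneg) ⊤ ≤
        comap (M.act y) (map₂ M.gnegExtAct.toLinearMap (⋀[ℂ]^(k + 1) L.gneg) ⊤) from h ht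
    refine map₂_le.mpr fun ω hω m _ => ?_
    have hyω : ExteriorAlgebra.ι ℂ (⟨y, hy⟩ : L.gneg) * ω ∈ ⋀[ℂ]^(k + 1) L.gneg := by
      rw [ExteriorAlgebra.exteriorPower, pow_succ']
      exact mul_mem_mul (LinearMap.mem_range_self _ _) hω
    rw [mem_comap]
    convert apply_mem_map₂ M.gnegExtAct.toLinearMap hyω (mem_top (x := m)) using 1
    simp [gnegExtAct]

lemma lower_iterate_eq_bot [FiniteDimensional ℂ L.gneg] {k : ℕ} (hk : finrank ℂ L.gneg < k) :
    M.lower^[k] ⊤ = ⊥ := by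
  have : ⋀[ℂ]^k L.gneg = ⊥ := by
    rw [← Submodule.finrank_eq_zero, exteriorPower.finrank_eq, Nat.choose_eq_zero_of_lt hk]
  rw [eq_bot_iff, ← map₂_bot_left M.gnegExtAct.toLinearMap ⊤, ← this]
  exact lower_iterate_le k

lemma lower_bot : M.lower ⊥ = ⊥ := map₂_bot_right _ _

lemma lower_mono {A B : Submodule ℂ M.carrier} (h : A ≤ B) : M.lower A ≤ M.lower B :=
  map₂_le_map₂_right h

lemma eq_top_of_le_sup_lower [FiniteDimensional ℂ L.gneg] {J : Submodule ℂ M.carrier}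
    (hJ : M.lower J ≤ J) (h : ⊤ ≤ J ⊔ M.lower ⊤) : J = ⊤ := by
  have key : ∀ k, ⊤ ≤ J ⊔ M.lower^[k] ⊤ := by
    intro k
    induction k with
    | zero => exact le_sup_right
    | succ k ih =>
      calc ⊤ ≤ J ⊔ M.lower ⊤ := h
        _ ≤ J ⊔ M.lower (J ⊔ M.lower^[k] ⊤) := sup_le_sup_left (lower_mono ih) _
        _ = J ⊔ M.lower J ⊔ M.lower^[k + 1] ⊤ := by
          rw [lower, map₂_sup_right, ← sup_assoc, Function.iterate_succ_apply']; rfl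
        _ ≤ J ⊔ M.lower^[k + 1] ⊤ := sup_le_sup_right (sup_le le_rfl hJ) _
  simpa [lower_iterate_eq_bot (Nat.lt_succ_self _)] using key (finrank ℂ L.gneg + 1)

lemma _root_.Submodule.IsGradedBy.lower {A : Submodule ℂ M.carrier}
    (hA : A.IsGradedBy M.ev M.od) : (M.lower A).IsGradedBy M.ev M.od := by
  have hev : M.lower (A ⊓ M.ev) ≤ M.lower A ⊓ M.od := map₂_le.mpr fun y hy a ha =>
    ⟨act_mem_lower hy ha.1, M.act_o_ev y (L.gneg_le_odd hy) a ha.2⟩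
  have hod : M.lower (A ⊓ M.od) ≤ M.lower A ⊓ M.ev := map₂_le.mpr fun y hy a ha =>
    ⟨act_mem_lower hy ha.1, M.act_o_od y (L.gneg_le_odd hy) a ha.2⟩
  calc M.lower A ≤ M.lower (A ⊓ M.ev ⊔ A ⊓ M.od) := lower_mono hA
    _ = M.lower (A ⊓ M.ev) ⊔ M.lower (A ⊓ M.od) := map₂_sup_right _ _ _ _
    _ ≤ M.lower A ⊓ M.ev ⊔ M.lower A ⊓ M.od := by rw [sup_comm]; exact sup_le_sup hod hev

lemma lower_le_comap_of_mem_g0 {A : Submodule ℂ M.carrier} {x : L.carrier} (hx : x ∈ L.g0)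
    (hA : A ≤ A.comap (M.act x)) : M.lower A ≤ (M.lower A).comap (M.act x) :=
  map₂_le.mpr fun y hy a ha => by
    rw [mem_comap, ← eq_sub_iff_add_eq.mp (M.act_br_e x y (Or.inl hx) a)]
    exact add_mem (act_mem_lower (L.br_0n x hx y hy) ha) (act_mem_lower hy (hA ha))

lemma lower_le_comap_of_mem_gpos {A B : Submodule ℂ M.carrier} {u : L.carrier}
    (hu : u ∈ L.gpos) (hA : ∀ x ∈ L.g0, A ≤ A.comap (M.act x)) (hAB : A ≤ B.comap (M.act u)) :
    M.lower A ≤ (A ⊔ M.lower B).comap (M.act u) :=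
  map₂_le.mpr fun y hy a ha => by
    have h : M.act u (M.act y a) = M.act (L.bracket u y) a - M.act y (M.act u a) := by
      rw [M.act_br_oo u (L.gpos_le_odd hu) y (L.gneg_le_odd hy) a, add_sub_cancel_right]
    rw [mem_comap, h]
    exact sub_mem (mem_sup_left (hA _ (L.br_pn u hu y hy) ha))
      (mem_sup_right (act_mem_lower hy (hAB ha)))

lemma isSubmod_of_le_comap {A : Submodule ℂ M.carrier}
    (h0 : ∀ x ∈ L.g0, A ≤ A.comap (M.act x)) (hneg : ∀ y ∈ L.gneg, A ≤ A.comap (M.act y))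
    (hpos : ∀ u ∈ L.gpos, A ≤ A.comap (M.act u)) (hA : A.IsGradedBy M.ev M.od) :
    M.IsSubmod A := by
  have hstab : ⊤ ≤ (compatibleMaps A A).comap M.act := by
    rw [← L.g0_sup_odd, GLSA.odd]
    exact sup_le h0 (sup_le hneg hpos)
  exact ⟨fun x m hm => hstab (mem_top (x := x)) hm, hA⟩

lemma IsSubmod.isGradedBy {J : Submodule ℂ M.carrier} (hJ : M.IsSubmod J) :
    J.IsGradedBy M.ev M.od :=
  hJ.2

lemma IsSubmod.lower_le {J : Submodule ℂ M.carrier} (hJ : M.IsSubmod J) : M.lower J ≤ J :=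
  map₂_le.mpr fun y _ _ hm => hJ.1 y _ hm

lemma IsSubmod.le_comap {J : Submodule ℂ M.carrier} (hJ : M.IsSubmod J) (x : L.carrier) :
    J ≤ J.comap (M.act x) :=
  fun m hm => hJ.1 x m hm

variable (M) in
/-- The largest `𝔤₁`-stable subspace of `A`. -/
def posCore (A : Submodule ℂ M.carrier) : Submodule ℂ M.carrier :=
  ⨅ f ∈ Submonoid.closure (M.act '' L.gpos), A.comap f

variable {A : Submodule ℂ M.carrier}

lemma mem_posCore {m : M.carrier} :
    m ∈ M.posCore A ↔ ∀ f ∈ Submonoid.closure (M.act '' L.gpos), f m ∈ A := by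
  simp [posCore]

lemma posCore_le : M.posCore A ≤ A :=
  fun _ hm => mem_posCore.mp hm 1 (one_mem _)

lemma act_mem_posCore {u : L.carrier} (hu : u ∈ L.gpos) {m : M.carrier}
    (hm : m ∈ M.posCore A) : M.act u m ∈ M.posCore A :=
  mem_posCore.mpr fun f hf =>
    mem_posCore.mp hm (f * M.act u) (mul_mem hf (Submonoid.subset_closure ⟨u, hu, rfl⟩))

lemma mem_posCore_of_act_mem {m : M.carrier} (hm : m ∈ A)
    (h : ∀ u ∈ L.gpos, M.act u m ∈ M.posCore A) : m ∈ M.posCore A := by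
  refine mem_posCore.mpr fun f hf => ?_
  induction hf using Submonoid.closure_induction_right with
  | one => exact hm
  | mul_right f hf _ hg _ =>
    obtain ⟨u, hu, rfl⟩ := hg
    exact mem_posCore.mp (h u hu) f hf

lemma le_posCore {J : Submodule ℂ M.carrier} (hJ : ∀ u ∈ L.gpos, J ≤ J.comap (M.act u))
    (hJA : J ≤ A) : J ≤ M.posCore A := by
  intro m hm
  refine mem_posCore.mpr fun f hf => hJA ?_
  induction hf using Submonoid.closure_induction_right generalizing m with
  | one => exact hm
  | mul_right f _ _ hg ih =>
    obtain ⟨u, hu, rfl⟩ := hg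
    exact ih (hJ u hu hm)

lemma posCore_le_comap_of_mem_g0 (hA : ∀ x ∈ L.g0, A ≤ A.comap (M.act x)) {x : L.carrier}
    (hx : x ∈ L.g0) : M.posCore A ≤ (M.posCore A).comap (M.act x) := by
  intro m hm
  rw [mem_comap, mem_posCore]
  intro f hf
  induction hf using Submonoid.closure_induction_right generalizing m with
  | one => exact hA x hx (posCore_le hm)
  | mul_right f hf _ hg ih =>
    obtain ⟨u, hu, rfl⟩ := hg
    have h : M.act u (M.act x m) = M.act (L.bracket u x) m + M.act x (M.act u m) :=
      (eq_sub_iff_add_eq.mp (M.act_br_e u x (Or.inr hx) m)).symm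
    rw [Module.End.mul_apply, h, map_add]
    refine add_mem ?_ (ih (act_mem_posCore hu hm))
    exact mem_posCore.mp hm (f * M.act _) (mul_mem hf (Submonoid.subset_closure
      ⟨_, GLSA.bracket_mem_gpos_of_mem_gpos_of_mem_g0 hu hx, rfl⟩))

lemma posCore_le_comap_of_mem_gneg (hA : ∀ x ∈ L.g0, A ≤ A.comap (M.act x))
    (hlow : M.lower ⊤ ≤ A) {y : L.carrier} (hy : y ∈ L.gneg) :
    M.posCore A ≤ (M.posCore A).comap (M.act y) := by
  intro m hm
  rw [mem_comap, mem_posCore]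
  intro f hf
  induction hf using Submonoid.closure_induction_right generalizing m with
  | one => exact hlow (act_mem_lower hy mem_top)
  | mul_right f hf _ hg ih =>
    obtain ⟨u, hu, rfl⟩ := hg
    have h : M.act u (M.act y m) = M.act (L.bracket u y) m - M.act y (M.act u m) := by
      rw [M.act_br_oo u (L.gpos_le_odd hu) y (L.gneg_le_odd hy) m, add_sub_cancel_right]
    rw [Module.End.mul_apply, h, map_sub]
    exact sub_mem (mem_posCore.mp (posCore_le_comap_of_mem_g0 hA (L.br_pn u hu y hy) hm) f hf)
      (ih (act_mem_posCore hu hm))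

lemma parity_of_mem_closure {f : Module.End ℂ M.carrier}
    (hf : f ∈ Submonoid.closure (M.act '' L.gpos)) {e o : M.carrier} (he : e ∈ M.ev)
    (ho : o ∈ M.od) : (f e ∈ M.ev ∧ f o ∈ M.od) ∨ (f e ∈ M.od ∧ f o ∈ M.ev) := by
  induction hf using Submonoid.closure_induction_right generalizing e o with
  | one => exact Or.inl ⟨he, ho⟩
  | mul_right f _ _ hg ih =>
    obtain ⟨u, hu, rfl⟩ := hg
    have h := ih (M.act_o_od u (L.gpos_le_odd hu) o ho) (M.act_o_ev u (L.gpos_le_odd hu) e he)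
    exact h.symm.imp And.symm And.symm

lemma _root_.Submodule.IsGradedBy.posCore (hA : A.IsGradedBy M.ev M.od) :
    (M.posCore A).IsGradedBy M.ev M.od := by
  intro m hm
  obtain ⟨e, he, o, ho, rfl⟩ :=
    mem_sup.mp (codisjoint_iff.mp M.grading.codisjoint ▸ mem_top : m ∈ M.ev ⊔ M.od)
  have heA : e ∈ M.posCore A := mem_posCore.mpr fun f hf => by
    have hsum : f e + f o ∈ A := by rw [← map_add]; exact mem_posCore.mp hm f hf
    rcases parity_of_mem_closure hf he ho with ⟨hfe, hfo⟩ | ⟨hfe, hfo⟩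
    · exact hA.mem_left M.grading.disjoint hfe hfo hsum
    · exact hA.symm.mem_left M.grading.disjoint.symm hfe hfo hsum
  have hoA : o ∈ M.posCore A := by simpa using sub_mem hm heA
  exact add_mem (mem_sup_left ⟨heA, he⟩) (mem_sup_right ⟨hoA, ho⟩)

lemma isSubmod_posCore (hA : ∀ x ∈ L.g0, A ≤ A.comap (M.act x)) (hlow : M.lower ⊤ ≤ A)
    (hgr : A.IsGradedBy M.ev M.od) : M.IsSubmod (M.posCore A) :=
  isSubmod_of_le_comap (fun _ => posCore_le_comap_of_mem_g0 hA)
    (fun _ => posCore_le_comap_of_mem_gneg hA hlow)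
    (fun _ hu _ hm => act_mem_posCore hu hm) hgr.posCore

def twist (M : SMod L) (σ : L.carrier →ₗ[ℂ] L.carrier) (h0 : ∀ x ∈ L.g0, σ x ∈ L.g0)
    (h1 : ∀ x ∈ L.odd, σ x ∈ L.odd)
    (hbr : ∀ x y, σ (L.bracket x y) = L.bracket (σ x) (σ y)) : SMod L where
  carrier := M.carrier
  act := M.act ∘ₗ σ
  ev := M.ev
  od := M.od
  grading := M.grading
  act_e_ev x hx := M.act_e_ev _ (h0 x hx)
  act_e_od x hx := M.act_e_od _ (h0 x hx)
  act_o_ev x hx := M.act_o_ev _ (h1 x hx)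
  act_o_od x hx := M.act_o_od _ (h1 x hx)
  act_br_e x y hxy m := by
    simpa [hbr] using M.act_br_e _ _ (hxy.imp (h0 x) (h0 y)) m
  act_br_oo x hx y hy m := by
    simpa [hbr] using M.act_br_oo _ (h1 x hx) _ (h1 y hy) m

end SMod

namespace SHom

variable {L : GLSA} {M N : SMod L} (f : SHom M N)

lemma isSubmod_ker : M.IsSubmod (LinearMap.ker f.toLin) := by
  refine ⟨fun x m hm => ?_, ?_⟩
  · rw [LinearMap.mem_ker, f.equivar, LinearMap.mem_ker.mp hm, map_zero]
  · exact IsGradedBy.comap (bot_le : (⊥ : Submodule ℂ N.carrier) ≤ _) N.grading.disjoint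
      M.grading.codisjoint f.map_ev f.map_od

lemma isSubmod_map {C : Submodule ℂ M.carrier} (hC : M.IsSubmod C) :
    N.IsSubmod (C.map f.toLin) := by
  refine ⟨?_, hC.isGradedBy.map f.map_ev f.map_od⟩
  rintro x _ ⟨c, hc, rfl⟩
  exact ⟨M.act x c, hC.1 x c hc, f.equivar x c⟩

lemma map_mem_invPos {m : M.carrier} (hm : m ∈ M.invPos) : f.toLin m ∈ N.invPos :=
  fun u hu => by rw [← f.equivar, hm u hu, map_zero]

lemma ker_ne_top (hN : N.IsSimple) (hf : Surjective f.toLin) : LinearMap.ker f.toLin ≠ ⊤ := by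
  intro h
  refine hN.1 (eq_bot_iff.mpr fun n _ => ?_)
  obtain ⟨m, rfl⟩ := hf n
  have hm : m ∈ LinearMap.ker f.toLin := h ▸ mem_top
  exact hm

lemma le_ker_or_eq_top (hN : N.IsSimple) {C : Submodule ℂ M.carrier} (hC : M.IsSubmod C)
    (hker : LinearMap.ker f.toLin ≤ C) : C ≤ LinearMap.ker f.toLin ∨ C = ⊤ := by
  refine (hN.2 _ (f.isSubmod_map hC)).imp (fun h => map_le_iff_le_comap.mp h.le) fun h => ?_
  refine eq_top_iff.mpr fun m _ => ?_
  obtain ⟨c, hc, hcm⟩ := (h ▸ mem_top : f.toLin m ∈ C.map f.toLin)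
  have hmc : m - c ∈ C := hker (by rw [LinearMap.mem_ker, map_sub, hcm, sub_self])
  simpa using add_mem hmc hc

end SHom

lemma SMod.not_sIso_pshift_of_invPos_le {L : GLSA} {Q : SMod L} (hne : Q.invPos ≠ ⊥)
    (hpure : Q.invPos ≤ Q.ev ∨ Q.invPos ≤ Q.od) : ¬ SIso Q Q.pshift := by
  rintro ⟨f, hf⟩
  obtain ⟨w, hw, hw0⟩ := exists_mem_ne_zero_of_ne_bot hne
  have hfw : f.toLin w ∈ Q.invPos := f.map_mem_invPos hw
  refine hw0 (hf.1 ?_)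
  rw [map_zero]
  rcases hpure with h | h
  · exact disjoint_def.mp Q.grading.disjoint _ (h hfw) (f.map_ev w (h hw))
  · exact disjoint_def.mp Q.grading.disjoint _ (f.map_od w (h hw)) (h hfw)

lemma SMod0.IsSimple.ev_eq_bot_or_eq_top {L : GLSA} {V : SMod0 L} (hV : V.IsSimple) :
    V.ev = ⊥ ∨ V.ev = ⊤ :=
  hV.2 V.ev ⟨fun x v hv => V.act_ev x v hv, fun _ hv => mem_sup_left ⟨hv, hv⟩⟩

section KacModule

variable {L : GLSA} {V : SMod0 L} {K : SMod L} {η : V.carrier →ₗ[ℂ] K.carrier}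

variable (K η) in
/-- The image of `Λˡ(𝔤₋₁) ⊗ V` in `K(V)`. -/
def kacLayer (l : ℕ) : Submodule ℂ K.carrier := K.lower^[l] (LinearMap.range η)

lemma kacLayer_succ (l : ℕ) : kacLayer K η (l + 1) = K.lower (kacLayer K η l) :=
  Function.iterate_succ_apply' _ _ _

namespace IsKac

variable (hK : IsKac V K η)
include hK

/-- `𝔤` need not contain a grading element; the degree operator is instead the homomorphism
`K(V) → K(V)^σ` given by the universal property, `σ` the grading automorphism. -/
lemma exists_scaling {t : ℂ} (ht : t ≠ 0) :
    ∃ Φ : Module.End ℂ K.carrier, (∀ v, Φ (η v) = η v) ∧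
      ∀ y ∈ L.gneg, ∀ m, Φ (K.act y m) = t⁻¹ • K.act y (Φ m) := by
  let Kσ := K.twist (L.gradingAut t) (fun x hx => (GLSA.gradingAut_of_mem_g0 hx).symm ▸ hx)
    (fun _ => GLSA.gradingAut_mem_odd) (GLSA.gradingAut_bracket ht)
  obtain ⟨Φ, hΦ, -⟩ := hK.universal Kσ η hK.map_ev hK.map_od
    (fun x v => by
      change η (V.act x v) = K.act (L.gradingAut t x) (η v)
      rw [GLSA.gradingAut_of_mem_g0 x.2, hK.equivar])
    (fun u hu v => by
      change K.act (L.gradingAut t u) (η v) = 0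
      rw [GLSA.gradingAut_of_mem_gpos hu, map_smul, LinearMap.smul_apply, hK.pos_zero u hu v,
        smul_zero])
  refine ⟨Φ.toLin, hΦ, fun y hy m => ?_⟩
  have h : Φ.toLin (K.act y m) = K.act (L.gradingAut t y) (Φ.toLin m) := Φ.equivar y m
  rw [GLSA.gradingAut_of_mem_gneg hy, map_smul] at h
  exact h

lemma kacLayer_le_comap_of_mem_g0 {x : L.carrier} (hx : x ∈ L.g0) (l : ℕ) :
    kacLayer K η l ≤ (kacLayer K η l).comap (K.act x) := by
  induction l with
  | zero =>
    rintro _ ⟨v, rfl⟩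
    exact ⟨V.act ⟨x, hx⟩ v, hK.equivar ⟨x, hx⟩ v⟩
  | succ l ih =>
    rw [kacLayer_succ]
    exact SMod.lower_le_comap_of_mem_g0 hx ih

lemma kacLayer_succ_le_comap_of_mem_gpos {u : L.carrier} (hu : u ∈ L.gpos) (l : ℕ) :
    kacLayer K η (l + 1) ≤ (kacLayer K η l).comap (K.act u) := by
  have h0 := fun x hx => hK.kacLayer_le_comap_of_mem_g0 (x := x) hx
  induction l with
  | zero =>
    have hker : kacLayer K η 0 ≤ (⊥ : Submodule ℂ K.carrier).comap (K.act u) := by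
      rintro _ ⟨v, rfl⟩
      exact hK.pos_zero u hu v
    have h := SMod.lower_le_comap_of_mem_gpos hu (h0 · · 0) hker
    rwa [SMod.lower_bot, sup_bot_eq, ← kacLayer_succ] at h
  | succ l ih =>
    have h := SMod.lower_le_comap_of_mem_gpos hu (h0 · · (l + 1)) ih
    rwa [← kacLayer_succ, ← kacLayer_succ, sup_idem] at h

lemma isGradedBy_kacLayer (l : ℕ) : (kacLayer K η l).IsGradedBy K.ev K.od := by
  induction l with
  | zero =>
    rw [kacLayer, Function.iterate_zero_apply, LinearMap.range_eq_map]
    exact (isGradedBy_top V.grading.codisjoint).map hK.map_ev hK.map_od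
  | succ l ih =>
    rw [kacLayer_succ]
    exact ih.lower

lemma iSup_kacLayer : ⨆ l, kacLayer K η l = ⊤ := by
  have hsub : K.IsSubmod (⨆ l, kacLayer K η l) := by
    refine SMod.isSubmod_of_le_comap (fun x hx => ?_) (fun y hy => ?_) (fun u hu => ?_)
      (isGradedBy_iSup hK.isGradedBy_kacLayer) <;> refine iSup_le fun l => ?_
    · exact (hK.kacLayer_le_comap_of_mem_g0 hx l).trans (comap_mono (le_iSup _ l))
    · intro m hm
      exact le_iSup (kacLayer K η) (l + 1) (kacLayer_succ l ▸ SMod.act_mem_lower hy hm)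
    · cases l with
      | zero =>
        rintro _ ⟨v, rfl⟩
        rw [mem_comap, hK.pos_zero u hu v]
        exact zero_mem _
      | succ l =>
        exact (hK.kacLayer_succ_le_comap_of_mem_gpos hu l).trans (comap_mono (le_iSup _ l))
  rw [eq_top_iff, ← hK.generates]
  exact sInf_le ⟨hsub, le_iSup (kacLayer K η) 0⟩

lemma lower_top : K.lower ⊤ = ⨆ l, kacLayer K η (l + 1) := by
  simp only [← hK.iSup_kacLayer, SMod.lower, map₂_iSup_right, kacLayer_succ]

lemma range_sup_lower_top : LinearMap.range η ⊔ K.lower ⊤ = ⊤ := by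
  rw [hK.lower_top, eq_top_iff, ← hK.iSup_kacLayer]
  refine iSup_le fun l => ?_
  cases l with
  | zero => exact le_sup_left
  | succ l => exact le_sup_of_le_right (le_iSup (fun l => kacLayer K η (l + 1)) l)

lemma disjoint_range_lower_top : Disjoint (LinearMap.range η) (K.lower ⊤) := by
  obtain ⟨Φ, hΦη, hΦ⟩ := hK.exists_scaling (two_ne_zero : (2 : ℂ) ≠ 0)
  have hlayer : ∀ l, kacLayer K η l ≤ Φ.eigenspace ((2 : ℂ)⁻¹ ^ l) := by
    intro l
    induction l with
    | zero =>
      rintro _ ⟨v, rfl⟩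
      simp [hΦη]
    | succ l ih =>
      rw [kacLayer_succ]
      refine map₂_le.mpr fun y hy m hm => ?_
      have hm' := ih hm
      rw [Module.End.mem_eigenspace_iff] at hm' ⊢
      rw [hΦ y hy, hm', map_smul, smul_smul, pow_succ']
  refine ((Φ.eigenspaces_iSupIndep) 1).mono (by simpa [kacLayer] using hlayer 0) ?_
  rw [hK.lower_top]
  refine iSup_le fun l => (hlayer (l + 1)).trans (le_iSup₂_of_le ((2 : ℂ)⁻¹ ^ (l + 1)) ?_ le_rfl)
  rw [inv_pow, inv_ne_one]
  exact_mod_cast (Nat.one_lt_two_pow l.succ_ne_zero).ne'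

lemma eq_top_of_range_le {J : Submodule ℂ K.carrier} (hJ : K.IsSubmod J)
    (h : LinearMap.range η ≤ J) : J = ⊤ :=
  eq_top_iff.mpr (hK.generates ▸ sInf_le ⟨hJ, h⟩)

lemma le_lower_top [FiniteDimensional ℂ L.gneg] (hV : V.IsSimple) {J : Submodule ℂ K.carrier}
    (hJ : K.IsSubmod J) (hJtop : J ≠ ⊤) : J ≤ K.lower ⊤ := by
  set VJ := (J ⊔ K.lower ⊤).comap η
  have hVJ : V.IsSubmod VJ := by
    refine ⟨fun x v hv => ?_, ?_⟩
    · have hstab : J ⊔ K.lower ⊤ ≤ (J ⊔ K.lower ⊤).comap (K.act x) :=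
        sup_le (hJ.le_comap x |>.trans (comap_mono le_sup_left))
          ((SMod.lower_le_comap_of_mem_g0 x.2 le_top).trans (comap_mono le_sup_right))
      rw [mem_comap, hK.equivar]
      exact hstab hv
    · exact (isGradedBy_sup hJ.isGradedBy (isGradedBy_top K.grading.codisjoint).lower).comap
        K.grading.disjoint V.grading.codisjoint hK.map_ev hK.map_od
  rcases hV.2 VJ hVJ with hbot | htop
  · intro j hj
    have hj' : j ∈ LinearMap.range η ⊔ K.lower ⊤ := by rw [hK.range_sup_lower_top]; trivial
    obtain ⟨_, ⟨v, rfl⟩, t, ht, rfl⟩ := mem_sup.mp hj'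
    have hv : v ∈ VJ := by
      rw [mem_comap]
      simpa using sub_mem (mem_sup_left hj : _ ∈ J ⊔ K.lower ⊤) (mem_sup_right ht)
    rw [hbot, mem_bot] at hv
    simpa [hv] using ht
  · have hrange : LinearMap.range η ≤ J ⊔ K.lower ⊤ := by
      rintro _ ⟨v, rfl⟩
      exact (htop ▸ mem_top : v ∈ VJ)
    refine absurd (SMod.eq_top_of_le_sup_lower hJ.lower_le ?_) hJtop
    calc ⊤ = LinearMap.range η ⊔ K.lower ⊤ := hK.range_sup_lower_top.symm
      _ ≤ J ⊔ K.lower ⊤ := sup_le hrange le_sup_right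

lemma posCore_lower_top_eq_ker [FiniteDimensional ℂ L.gneg] (hV : V.IsSimple) {Q : SMod L}
    (hQ : Q.IsSimple) (π : SHom K Q) (hπ : Surjective π.toLin) :
    K.posCore (K.lower ⊤) = LinearMap.ker π.toLin := by
  set J := LinearMap.ker π.toLin
  have hJ : K.IsSubmod J := π.isSubmod_ker
  have hJtop : J ≠ ⊤ := π.ker_ne_top hQ hπ
  have hC : K.IsSubmod (K.posCore (K.lower ⊤)) := SMod.isSubmod_posCore
    (fun _ hx => SMod.lower_le_comap_of_mem_g0 hx le_top) le_rfl
    (isGradedBy_top K.grading.codisjoint).lower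
  have hJC : J ≤ K.posCore (K.lower ⊤) :=
    SMod.le_posCore (fun u _ => hJ.le_comap u) (hK.le_lower_top hV hJ hJtop)
  refine le_antisymm ((π.le_ker_or_eq_top hQ hC hJC).resolve_right fun hCtop => hJtop ?_) hJC
  have hlow : K.lower ⊤ = ⊤ := eq_top_iff.mpr (hCtop.ge.trans SMod.posCore_le)
  have hrange : LinearMap.range η = ⊥ := disjoint_top.mp (hlow ▸ hK.disjoint_range_lower_top)
  exact hK.eq_top_of_range_le hJ (hrange ▸ bot_le)

lemma invPos_eq_range [FiniteDimensional ℂ L.gneg] (hV : V.IsSimple) {Q : SMod L}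
    (hQ : Q.IsSimple) (π : SHom K Q) (hπ : Surjective π.toLin) :
    Q.invPos = LinearMap.range (π.toLin ∘ₗ η) := by
  refine le_antisymm (fun a ha => ?_) ?_
  · obtain ⟨k, rfl⟩ := hπ a
    have hk : k ∈ LinearMap.range η ⊔ K.lower ⊤ := by rw [hK.range_sup_lower_top]; trivial
    obtain ⟨_, ⟨v, rfl⟩, t, ht, rfl⟩ := mem_sup.mp hk
    have htπ : ∀ u ∈ L.gpos, K.act u t ∈ LinearMap.ker π.toLin := fun u hu => by
      have h := ha u hu
      rwa [map_add, map_add, ← π.equivar, hK.pos_zero u hu v, map_zero, zero_add,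
        ← π.equivar] at h
    have ht0 : t ∈ LinearMap.ker π.toLin := by
      rw [← hK.posCore_lower_top_eq_ker hV hQ π hπ] at htπ ⊢
      exact SMod.mem_posCore_of_act_mem ht htπ
    exact ⟨v, by simp [LinearMap.mem_ker.mp ht0]⟩
  · rintro _ ⟨v, rfl⟩ u hu
    simp [← π.equivar, hK.pos_zero u hu v]

lemma range_comp_ne_bot {Q : SMod L} (hQ : Q.IsSimple) (π : SHom K Q)
    (hπ : Surjective π.toLin) : LinearMap.range (π.toLin ∘ₗ η) ≠ ⊥ := by
  intro hbot
  refine π.ker_ne_top hQ hπ (hK.eq_top_of_range_le π.isSubmod_ker ?_)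
  rintro _ ⟨v, rfl⟩
  exact LinearMap.congr_fun (LinearMap.range_eq_bot.mp hbot) v

lemma range_comp_le_ev_or_od (hV : V.IsSimple) {Q : SMod L} (π : SHom K Q) :
    LinearMap.range (π.toLin ∘ₗ η) ≤ Q.ev ∨ LinearMap.range (π.toLin ∘ₗ η) ≤ Q.od := by
  rcases hV.ev_eq_bot_or_eq_top with h | h
  · have hod : V.od = ⊤ := by simpa [h] using codisjoint_iff.mp V.grading.codisjoint
    exact Or.inr (by rintro _ ⟨v, rfl⟩; exact π.map_od _ (hK.map_od v (hod ▸ mem_top)))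
  · exact Or.inl (by rintro _ ⟨v, rfl⟩; exact π.map_ev _ (hK.map_ev v (h ▸ mem_top)))

end IsKac

end KacModule

theorem statement_12_general (L : GLSA)
    [FiniteDimensional ℂ ↥L.gneg]
    (V : SMod0 L) (hV : V.IsSimple)
    (K : SMod L) (η : V.carrier →ₗ[ℂ] K.carrier) (hK : IsKac V K η)
    (Q : SMod L) (hQ : Q.IsSimple) (π : SHom K Q) (hπ : Surjective π.toLin) :
    ¬ SIso Q Q.pshift := by
  have hinv := hK.invPos_eq_range hV hQ π hπ
  refine SMod.not_sIso_pshift_of_invPos_le ?_ ?_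
  · rw [hinv]
    exact hK.range_comp_ne_bot hQ π hπ
  · rw [hinv]
    exact hK.range_comp_le_ev_or_od hV π

/-- For every simple `𝔤₀`-supermodule `V`, the simple `𝔤`-supermodule
`L(V)` (the simple top of the Kac module `K(V)`) is not isomorphic to its parity shift
`Π L(V)`. -/
theorem statement_12 (L : GLSA)
    [FiniteDimensional ℂ ↥L.gneg] [FiniteDimensional ℂ ↥L.gpos]
    (V : SMod0 L) (hV : V.IsSimple)
    (K : SMod L) (η : V.carrier →ₗ[ℂ] K.carrier) (hK : IsKac V K η)
    (Q : SMod L) (hQ : Q.IsSimple) (π : SHom K Q) (hπ : Surjective π.toLin) :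
    ¬ SIso Q Q.pshift :=
  statement_12_general L V hV K η hK Q hQ π hπ
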